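/- The largest possible real part of (75 + 117i)z + (96 + 144i)/z over complex numbers z with |z| = 4 is 540. -/

import Mathlib

open Complex in
/-- The largest possible real part of (75+117i)z + (96+144i)/z over |z| = 4
is 540. -/
theorem max_real_part :
    (∀ z : ℂ, ‖z‖ = 4 →
      ((75 + 117 * I) * z + (96 + 144 * I) / z).re ≤ 540) ∧
    (∃ z : ℂ, ‖z‖ = 4 ∧
      ((75 + 117 * I) * z + (96 + 144 * I) / z).re = 540) := by
  constructor
  · intro z hz
    have hn : Complex.normSq z = 16 := by
      rw [← Complex.sq_norm, hz]; norm_num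
    have hxy : z.re ^ 2 + z.im ^ 2 = 16 := by
      have := hn; rw [Complex.normSq_apply] at this; nlinarith [this]
    simp only [Complex.add_re, Complex.mul_re, Complex.div_re, hn,
      Complex.add_im, Complex.mul_im, Complex.add_re, Complex.I_re, Complex.I_im, Complex.mul_re,
      Complex.re_ofNat, Complex.im_ofNat]
    nlinarith [sq_nonneg (4 * z.re + 3 * z.im), hxy]
  · refine ⟨⟨12/5, -16/5⟩, ?_, ?_⟩
    · rw [Complex.norm_def, Complex.normSq_apply]
      norm_num
    · have hn : Complex.normSq ⟨12/5, -16/5⟩ = 16 := by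
        rw [Complex.normSq_apply]; norm_num
      simp only [Complex.add_re, Complex.mul_re, Complex.div_re, hn,
        Complex.I_re, Complex.I_im, Complex.re_ofNat, Complex.im_ofNat]
      norm_num
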